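/- arXiv:1112.1859 — 3 statements merged into one kernel-verified Lean document; each statement's English description precedes it below -/
import Mathlib

section
/- Suppose each approximate backward flow B̄_{h,k} is a bijection of ℝ^d with inverse F̄_{h,k}, and define the transported particles by T̄_h φ⁰_{h,k}(x) := φ⁰_{h,k}(B̄_{h,k}(x)), so that they are supported in F̄_{h,k}(Σ⁰_{h,k}); set Σ_{h,k} := F̄(Σ⁰_{h,k}) ∪ F̄_{h,k}(Σ⁰_{h,k}) and e_B(h) := sup_{k∈ℤ^d} sup_{x∈Σ_{h,k}} ‖B̄_{h,k}(x) − B̄(x)‖_∞. Then there exists a constant C depending only on c_w, L_φ, ρ⁰ and d (independent of h, f⁰, the flow F̄ and the approximate flows) such that ‖(T̄_h − T̄_ex) f⁰_h‖_{L^∞(ℝ^d)} ≤ C (1 + e_B(h)/h)^d · (e_B(h)/h) · ‖f⁰‖_{L^∞}. -/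
open scoped NNReal
open Set

/-- Grid node `x⁰_k := h k`. -/
noncomputable def node (d : ℕ) (h : ℝ) (k : Fin d → ℤ) : Fin d → ℝ :=
  fun i => h * (k i : ℝ)

/-- Particle shape function `φ⁰_{h,k}(x) := h^{-d} φ(h⁻¹ x - k)`. -/
noncomputable def part (d : ℕ) (h : ℝ) (φ : (Fin d → ℝ) → ℝ)
    (k : Fin d → ℤ) (x : Fin d → ℝ) : ℝ :=
  (h ^ d)⁻¹ * φ (fun i => x i / h - (k i : ℝ))

/-! At a point `x`, the `k`-th particle contributes to either sum only if `B̄_{h,k}(x)` or `B̄(x)`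
lies in `Σ⁰_{h,k}`; then `x ∈ Σ_{h,k}`, so `‖B̄_{h,k}(x) - B̄(x)‖ ≤ e_B` and `k` lies within
`ρ⁰ + e_B / h` of `B̄(x) / h` in the sup norm. Hence at most `(2ρ⁰ + 2e_B/h + 1)^d` terms are
nonzero, and by the Lipschitz bound on `φ` each differs by at most `c_w L_φ (e_B/h) ‖f⁰‖_∞`. -/

open Finset in
theorem card_Icc_ceil_floor_le {a b : ℝ} (hab : a ≤ b) :
    (#(Icc ⌈a⌉ ⌊b⌋) : ℝ) ≤ b - a + 1 := by
  have hle : ⌈a⌉ ≤ ⌊b⌋ + 1 := (Int.ceil_mono hab).trans (Int.ceil_le_floor_add_one b)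
  have hcard : (#(Icc ⌈a⌉ ⌊b⌋) : ℝ) = ⌊b⌋ + 1 - ⌈a⌉ := by
    exact_mod_cast Int.card_Icc_of_le _ _ hle
  rw [hcard]
  linarith [Int.floor_le b, Int.le_ceil a]

noncomputable def latticeBox {d : ℕ} (c : Fin d → ℝ) (r : ℝ) : Finset (Fin d → ℤ) :=
  Fintype.piFinset fun i => Finset.Icc ⌈c i - r⌉ ⌊c i + r⌋

theorem mem_latticeBox_of_norm_sub_le {d : ℕ} {c : Fin d → ℝ} {r : ℝ} {k : Fin d → ℤ}
    (hk : ‖c - fun i => (k i : ℝ)‖ ≤ r) : k ∈ latticeBox c r := by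
  rw [latticeBox, Fintype.mem_piFinset]
  intro i
  have hi : |c i - k i| ≤ r := (norm_le_pi_norm _ i).trans hk
  rw [abs_le] at hi
  exact Finset.mem_Icc.2 ⟨Int.ceil_le.2 (by linarith), Int.le_floor.2 (by linarith)⟩

open Finset in
theorem card_latticeBox_le {d : ℕ} (c : Fin d → ℝ) {r : ℝ} (hr : 0 ≤ r) :
    (#(latticeBox c r) : ℝ) ≤ (2 * r + 1) ^ d := by
  rw [latticeBox, Fintype.card_piFinset, Nat.cast_prod]
  calc ∏ i, (#(Finset.Icc ⌈c i - r⌉ ⌊c i + r⌋) : ℝ) ≤ ∏ _i : Fin d, (2 * r + 1) := by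
        gcongr with i
        calc _ ≤ c i + r - (c i - r) + 1 := card_Icc_ceil_floor_le (by linarith)
          _ = 2 * r + 1 := by ring
    _ = (2 * r + 1) ^ d := by simp

theorem abs_tsum_sub_tsum_le_card_mul {ι : Type*} {f g : ι → ℝ} {S : Finset ι} {b : ℝ}
    (hb : 0 ≤ b) (hfg : ∀ k, f k ≠ 0 ∨ g k ≠ 0 → k ∈ S ∧ |f k - g k| ≤ b) :
    |∑' k, f k - ∑' k, g k| ≤ S.card * b := by
  have hf : ∀ k ∉ S, f k = 0 := fun k hk => by_contra fun h => hk (hfg k (.inl h)).1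
  have hg : ∀ k ∉ S, g k = 0 := fun k hk => by_contra fun h => hk (hfg k (.inr h)).1
  rw [tsum_eq_sum hf, tsum_eq_sum hg, ← Finset.sum_sub_distrib, ← nsmul_eq_mul]
  refine (Finset.abs_sum_le_sum_abs _ _).trans (Finset.sum_le_card_nsmul _ _ _ fun k _ => ?_)
  by_cases hk : f k = 0 ∧ g k = 0
  · simpa [hk.1, hk.2] using hb
  · exact (hfg k (not_and_or.1 hk)).2

section Particles

variable {d : ℕ} {h : ℝ} {φ : (Fin d → ℝ) → ℝ} (k : Fin d → ℤ)

theorem part_eq_smul (y : Fin d → ℝ) :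
    part d h φ k y = (h ^ d)⁻¹ * φ (h⁻¹ • y - fun i => (k i : ℝ)) := by
  simp only [part, div_eq_inv_mul]
  rfl

theorem norm_smul_sub_le_of_part_ne_zero {ρ0 : ℝ} (hsupp : ∀ x, φ x ≠ 0 → ‖x‖ ≤ ρ0)
    {y : Fin d → ℝ} (hk : part d h φ k y ≠ 0) : ‖h⁻¹ • y - fun i => (k i : ℝ)‖ ≤ ρ0 := by
  rw [part_eq_smul] at hk
  exact hsupp _ (right_ne_zero_of_mul hk)

theorem abs_part_sub_part_le {Lφ : ℝ≥0} (hφ : LipschitzWith Lφ φ) (hh : 0 < h)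
    (y z : Fin d → ℝ) :
    |part d h φ k y - part d h φ k z| ≤ (h ^ d)⁻¹ * (Lφ * (‖y - z‖ / h)) := by
  rw [part_eq_smul, part_eq_smul, ← mul_sub, abs_mul, abs_of_pos (by positivity)]
  gcongr
  calc _ ≤ Lφ * ‖(h⁻¹ • y - fun i => (k i : ℝ)) - (h⁻¹ • z - fun i => (k i : ℝ))‖ := by
        simpa only [← Real.norm_eq_abs, ← dist_eq_norm] using hφ.dist_le_mul _ _
    _ = Lφ * (‖y - z‖ / h) := by
        rw [sub_sub_sub_cancel_right, ← smul_sub, norm_smul, norm_inv, Real.norm_of_nonneg hh.le,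
          inv_mul_eq_div]

theorem mem_latticeBox_of_part_ne_zero {ρ0 e : ℝ} (hsupp : ∀ x, φ x ≠ 0 → ‖x‖ ≤ ρ0)
    (hh : 0 < h) {y z : Fin d → ℝ} (hk : part d h φ k y ≠ 0) (hyz : ‖y - z‖ ≤ e) :
    k ∈ latticeBox (h⁻¹ • z) (ρ0 + e / h) := by
  apply mem_latticeBox_of_norm_sub_le
  calc ‖h⁻¹ • z - fun i => (k i : ℝ)‖
      = ‖h⁻¹ • (z - y) + (h⁻¹ • y - fun i => (k i : ℝ))‖ := by rw [smul_sub, sub_add_sub_cancel]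
    _ ≤ ‖h⁻¹ • (z - y)‖ + ‖h⁻¹ • y - fun i => (k i : ℝ)‖ := norm_add_le _ _
    _ ≤ e / h + ρ0 := by
        gcongr
        · rw [norm_smul, norm_inv, Real.norm_of_nonneg hh.le, inv_mul_eq_div, norm_sub_rev]
          gcongr
        · exact norm_smul_sub_le_of_part_ne_zero k hsupp hk
    _ = ρ0 + e / h := add_comm _ _

theorem transport_term_mem_latticeBox_and_abs_sub_le {ρ0 e a wk : ℝ} {Lφ : ℝ≥0}
    (hφ : LipschitzWith Lφ φ) (hsupp : ∀ x, φ x ≠ 0 → ‖x‖ ≤ ρ0) (hh : 0 < h) (he : 0 ≤ e)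
    (hw : |wk| ≤ a * h ^ d) (F Bk : (Fin d → ℝ) ≃ (Fin d → ℝ))
    (hflow : ∀ x ∈ F '' Function.support (part d h φ k)
        ∪ Bk.symm '' Function.support (part d h φ k), ‖Bk x - F.symm x‖ ≤ e)
    {x : Fin d → ℝ} (hx : wk * part d h φ k (Bk x) ≠ 0 ∨ wk * part d h φ k (F.symm x) ≠ 0) :
    k ∈ latticeBox (h⁻¹ • F.symm x) (ρ0 + e / h) ∧
      |wk * part d h φ k (Bk x) - wk * part d h φ k (F.symm x)| ≤ a * Lφ * (e / h) := by
  replace hx := hx.imp right_ne_zero_of_mul right_ne_zero_of_mul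
  have hdist : ‖Bk x - F.symm x‖ ≤ e := hflow x <| hx.symm.imp
    (fun hx => ⟨F.symm x, hx, F.apply_symm_apply x⟩)
    (fun hx => ⟨Bk x, hx, Bk.symm_apply_apply x⟩)
  refine ⟨?_, ?_⟩
  · rcases hx with hx | hx
    · exact mem_latticeBox_of_part_ne_zero k hsupp hh hx hdist
    · exact mem_latticeBox_of_part_ne_zero k hsupp hh hx (by simpa using he)
  · calc _ = |wk| * |part d h φ k (Bk x) - part d h φ k (F.symm x)| := by
          rw [← mul_sub, abs_mul]
      _ ≤ (a * h ^ d) * ((h ^ d)⁻¹ * (Lφ * (e / h))) := by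
          gcongr
          · exact (abs_nonneg _).trans hw
          · exact (abs_part_sub_part_le k hφ hh _ _).trans (by gcongr)
      _ = a * Lφ * (e / h) := by field_simp

end Particles

open Finset in
theorem approx_transport_error_bijective_flows_general
    (d : ℕ) (cw : ℝ) (hcw : 0 < cw) (Lφ : ℝ≥0)
    (ρ0 : ℝ) (hρ0 : 0 < ρ0) :
    ∃ C : ℝ, 0 < C ∧
      ∀ (h : ℝ), 0 < h →
      ∀ (φ : (Fin d → ℝ) → ℝ), LipschitzWith Lφ φ → (∀ x, φ x ≠ 0 → ‖x‖ ≤ ρ0) →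
      ∀ (f0 : (Fin d → ℝ) → ℝ), BddAbove (Set.range fun x => |f0 x|) →
      ∀ (w : (Fin d → ℤ) → ℝ), (∀ k, |w k| ≤ cw * h ^ d * ⨆ y, |f0 y|) →
      ∀ (F : (Fin d → ℝ) ≃ (Fin d → ℝ))
        (Bh : (Fin d → ℤ) → (Fin d → ℝ) ≃ (Fin d → ℝ))
        (eB : ℝ), 0 ≤ eB →
        (∀ k, ∀ x ∈ (F '' Function.support (part d h φ k)
              ∪ (Bh k).symm '' Function.support (part d h φ k)),
            ‖Bh k x - F.symm x‖ ≤ eB) →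
      ∀ x : Fin d → ℝ,
        |(∑' k : Fin d → ℤ, w k * part d h φ k (Bh k x))
            - ∑' k : Fin d → ℤ, w k * part d h φ k (F.symm x)|
          ≤ C * (1 + eB / h) ^ d * (eB / h) * ⨆ y, |f0 y| := by
  refine ⟨cw * (Lφ + 1) * (2 * ρ0 + 2) ^ d, by positivity, ?_⟩
  intro h hh φ hφ hsupp f0 hf0 w hw F Bh eB heB hflow x
  set M := ⨆ y, |f0 y|
  have hM : 0 ≤ M := (abs_nonneg _).trans (le_ciSup hf0 0)
  have hε : 0 ≤ eB / h := div_nonneg heB hh.le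
  calc _ ≤ #(latticeBox (h⁻¹ • F.symm x) (ρ0 + eB / h)) * (cw * M * Lφ * (eB / h)) :=
        abs_tsum_sub_tsum_le_card_mul (by positivity) fun k =>
          transport_term_mem_latticeBox_and_abs_sub_le (a := cw * M) k hφ hsupp hh heB
            ((hw k).trans_eq (by ring)) F (Bh k) (hflow k)
    _ ≤ (2 * (ρ0 + eB / h) + 1) ^ d * (cw * M * Lφ * (eB / h)) := by
        gcongr
        exact card_latticeBox_le _ (by positivity)
    _ ≤ ((2 * ρ0 + 2) * (1 + eB / h)) ^ d * (cw * M * (Lφ + 1) * (eB / h)) := by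
        gcongr
        · nlinarith
        · linarith
    _ = cw * (Lφ + 1) * (2 * ρ0 + 2) ^ d * (1 + eB / h) ^ d * (eB / h) * M := by
        rw [mul_pow]; ring

/-- when the approximate backward flows `B̄_{h,k}` are bijections with inverses
`F̄_{h,k}`, the transport operator `T̄_h φ⁰_{h,k} := φ⁰_{h,k} ∘ B̄_{h,k}` satisfies
`‖(T̄_h − T̄_ex) f⁰_h‖_∞ ≤ C (1 + e_B/h)^d (e_B/h) ‖f⁰‖_∞` with `C = C(c_w, L_φ, ρ⁰, d)`,
where `e_B` is the backward flow error on `Σ_{h,k} := F̄(Σ⁰_{h,k}) ∪ F̄_{h,k}(Σ⁰_{h,k})`. -/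
theorem approx_transport_error_bijective_flows
    (d : ℕ) (hd : 1 ≤ d) (cw : ℝ) (hcw : 0 < cw) (Lφ : ℝ≥0)
    (ρ0 : ℝ) (hρ0 : 0 < ρ0) :
    ∃ C : ℝ, 0 < C ∧
      ∀ (h : ℝ), 0 < h →
      ∀ (φ : (Fin d → ℝ) → ℝ), LipschitzWith Lφ φ → (∀ x, φ x ≠ 0 → ‖x‖ ≤ ρ0) →
      ∀ (f0 : (Fin d → ℝ) → ℝ), BddAbove (Set.range fun x => |f0 x|) →
      ∀ (w : (Fin d → ℤ) → ℝ), (∀ k, |w k| ≤ cw * h ^ d * ⨆ y, |f0 y|) →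
      ∀ (F : (Fin d → ℝ) ≃ (Fin d → ℝ))
        (Bh : (Fin d → ℤ) → (Fin d → ℝ) ≃ (Fin d → ℝ))
        (eB : ℝ), 0 ≤ eB →
        (∀ k, ∀ x ∈ (F '' Function.support (part d h φ k)
              ∪ (Bh k).symm '' Function.support (part d h φ k)),
            ‖Bh k x - F.symm x‖ ≤ eB) →
      ∀ x : Fin d → ℝ,
        |(∑' k : Fin d → ℤ, w k * part d h φ k (Bh k x))
            - ∑' k : Fin d → ℤ, w k * part d h φ k (F.symm x)|
          ≤ C * (1 + eB / h) ^ d * (eB / h) * ⨆ y, |f0 y| :=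
  approx_transport_error_bijective_flows_general d cw hcw Lφ ρ0 hρ0
end

section
/- Set Σ_{h,k} := F̄_{(1),k}(Σ⁰_{h,k}) ∪ F̄(Σ⁰_{h,k}). Then the linearized backward flows approximate the exact backward flow at second order on these sets: sup_{k∈ℤ^d} sup_{x∈Σ_{h,k}} ‖B̄_{(1),k}(x) − B̄(x)‖_∞ ≤ (h²/2) (ρ⁰ |F̄|₁)² |B̄|₂. -/
open scoped NNReal
open Set

/-- Partial derivative `∂_l g`. -/
noncomputable def pd (d : ℕ) (l : Fin d) (g : (Fin d → ℝ) → ℝ) : (Fin d → ℝ) → ℝ :=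
  fun x => fderiv ℝ g x (Pi.single l 1)

/-- Linearized backward flow `B̄_{(1),k}(x) := x⁰_k + J_k⁻¹ (x − F̄(x⁰_k))`. -/
noncomputable def B1 (d : ℕ) (h : ℝ) (F : (Fin d → ℝ) ≃ (Fin d → ℝ))
    (k : Fin d → ℤ) (x : Fin d → ℝ) : Fin d → ℝ :=
  node d h k +
    fderiv ℝ (F.symm : (Fin d → ℝ) → (Fin d → ℝ)) (F (node d h k)) (x - F (node d h k))

/-- Linearized forward flow `F̄_{(1),k}(x̂) := F̄(x⁰_k) + J_k (x̂ − x⁰_k)`. -/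
noncomputable def F1 (d : ℕ) (h : ℝ) (F : (Fin d → ℝ) ≃ (Fin d → ℝ))
    (k : Fin d → ℤ) (y : Fin d → ℝ) : Fin d → ℝ :=
  F (node d h k) +
    fderiv ℝ (F : (Fin d → ℝ) → (Fin d → ℝ)) (node d h k) (y - node d h k)

/-! Put `v := x - F̄(x⁰_k)`. As `B̄(F̄(x⁰_k)) = x⁰_k`, the error `B̄_{(1),k}(x) - B̄(x)` is minus
the first-order Taylor remainder of `B̄` at `F̄(x⁰_k)` in direction `v`, which is at most
`|B̄|₂ ‖v‖² / 2` since `|B̄|₂` bounds the second derivative as a bilinear form for the sup norm.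
On both parts of `Σ_{h,k}` one has `‖v‖ ≤ |F̄|₁ h ρ⁰`: `|F̄|₁` is the maximal row sum of the
Jacobian, i.e. a bound for its operator norm, and `Σ⁰_{h,k}` has radius `h ρ⁰` around `x⁰_k`;
on the image under `F̄` the mean value inequality gives the same bound. -/

section PiCoordinates

variable {ι : Type*} [Fintype ι] [DecidableEq ι]

theorem abs_apply_le_norm_mul_sum_abs_apply_single (L : (ι → ℝ) →L[ℝ] ℝ) (w : ι → ℝ) :
    |L w| ≤ ‖w‖ * ∑ l, |L (Pi.single l 1)| := by
  have hL : L w = ∑ l, w l * L (Pi.single l 1) := by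
    conv_lhs => rw [← Finset.univ_sum_single w]
    simp only [map_sum]
    refine Finset.sum_congr rfl fun l _ => ?_
    rw [← smul_eq_mul, ← map_smul, ← Pi.single_smul, smul_eq_mul, mul_one]
  rw [hL, Finset.mul_sum]
  refine (Finset.abs_sum_le_sum_abs _ _).trans (Finset.sum_le_sum fun l _ => ?_)
  rw [abs_mul, ← Real.norm_eq_abs (w l)]
  exact mul_le_mul_of_nonneg_right (norm_le_pi_norm w l) (abs_nonneg _)

theorem abs_apply_apply_le_norm_mul_norm_mul_sum_abs (A : (ι → ℝ) →L[ℝ] (ι → ℝ) →L[ℝ] ℝ)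
    (w v : ι → ℝ) :
    |A w v| ≤ ‖w‖ * ‖v‖ * ∑ l₁, ∑ l₂, |A (Pi.single l₁ 1) (Pi.single l₂ 1)| := by
  calc |A w v| ≤ ‖v‖ * ∑ l₂, |A w (Pi.single l₂ 1)| :=
        abs_apply_le_norm_mul_sum_abs_apply_single _ _
    _ ≤ ‖v‖ * ∑ l₂, ‖w‖ * ∑ l₁, |A (Pi.single l₁ 1) (Pi.single l₂ 1)| := by
        gcongr with l₂
        exact abs_apply_le_norm_mul_sum_abs_apply_single (A.flip (Pi.single l₂ 1)) w
    _ = ‖w‖ * ‖v‖ * ∑ l₁, ∑ l₂, |A (Pi.single l₁ 1) (Pi.single l₂ 1)| := by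
        rw [Finset.sum_comm, ← Finset.mul_sum]
        ring

theorem opNorm_le_of_forall_sum_abs_apply_single_le {κ : Type*} [Fintype κ]
    (L : (ι → ℝ) →L[ℝ] (κ → ℝ)) {C : ℝ} (hC₀ : 0 ≤ C)
    (hC : ∀ i, ∑ l, |L (Pi.single l 1) i| ≤ C) : ‖L‖ ≤ C := by
  refine L.opNorm_le_bound hC₀ fun w => (pi_norm_le_iff_of_nonneg (by positivity)).2 fun i => ?_
  calc ‖L w i‖ ≤ ‖w‖ * ∑ l, |L (Pi.single l 1) i| :=
        abs_apply_le_norm_mul_sum_abs_apply_single ((ContinuousLinearMap.proj i).comp L) w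
    _ ≤ C * ‖w‖ := by rw [mul_comm]; gcongr; exact hC i

end PiCoordinates

theorem norm_image_add_sub_sub_fderiv_le {E F : Type*} [NormedAddCommGroup E] [NormedSpace ℝ E]
    [NormedAddCommGroup F] [NormedSpace ℝ F] {f : E → F} (hf : Differentiable ℝ f) {y v : E}
    {K : ℝ} (hK : ∀ t ∈ Ico (0 : ℝ) 1, ‖fderiv ℝ f (y + t • v) v - fderiv ℝ f y v‖ ≤ K * t) :
    ‖f (y + v) - f y - fderiv ℝ f y v‖ ≤ K / 2 := by
  set r : ℝ → F := fun t => f (y + t • v) - f y - t • fderiv ℝ f y v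
  have hr : ∀ t, HasDerivAt r (fderiv ℝ f (y + t • v) v - fderiv ℝ f y v) t := by
    intro t
    have hline : HasDerivAt (fun t : ℝ => y + t • v) v t := by
      simpa using ((hasDerivAt_id t).smul_const v).const_add y
    exact (((hf _).hasFDerivAt.comp_hasDerivAt t hline).sub_const (f y)).sub
      (by simpa using (hasDerivAt_id t).smul_const (fderiv ℝ f y v))
  have hbound : ∀ t, HasDerivAt (fun t : ℝ => K * t ^ 2 / 2) (K * t) t := fun t =>
    (((hasDerivAt_pow 2 t).const_mul K).div_const 2).congr_deriv (by push_cast; ring)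
  have := image_norm_le_of_norm_deriv_right_le_deriv_boundary (f := r)
    (fun t _ => (hr t).continuousAt.continuousWithinAt) (fun t _ => (hr t).hasDerivWithinAt)
    (by simp [r]) hbound hK (right_mem_Icc.2 zero_le_one)
  simpa [r] using this

section PartialDerivatives

variable {d : ℕ}

theorem pd_apply_eq_fderiv_apply {ι : Type*} {G : (Fin d → ℝ) → (ι → ℝ)} {z : Fin d → ℝ}
    (hG : DifferentiableAt ℝ G z) (l : Fin d) (i : ι) :
    pd d l (fun y => G y i) z = fderiv ℝ G z (Pi.single l 1) i := by
  unfold pd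
  rw [fderiv_apply hG]
  rfl

theorem fderiv_fderiv_apply {g : (Fin d → ℝ) → ℝ} {z : Fin d → ℝ}
    (hg : DifferentiableAt ℝ (fderiv ℝ g) z) (v : Fin d → ℝ) :
    fderiv ℝ (fun y => fderiv ℝ g y v) z = (fderiv ℝ (fderiv ℝ g) z).flip v := by
  rw [fderiv_clm_apply hg (differentiableAt_const v)]
  simp

theorem norm_fderiv_fderiv_apply_le {g : (Fin d → ℝ) → ℝ} (hg : ContDiff ℝ 2 g) {M : ℝ}
    (hM : ∀ z, ∑ l₁, ∑ l₂, |pd d l₁ (pd d l₂ g) z| ≤ M) (v z : Fin d → ℝ) :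
    ‖fderiv ℝ (fun y => fderiv ℝ g y v) z‖ ≤ M * ‖v‖ := by
  have hg' : Differentiable ℝ (fderiv ℝ g) :=
    (hg.fderiv_right (m := 1) (by norm_num)).differentiable one_ne_zero
  have hpd : ∀ l₁ l₂,
      pd d l₁ (pd d l₂ g) z = fderiv ℝ (fderiv ℝ g) z (Pi.single l₁ 1) (Pi.single l₂ 1) :=
    fun l₁ l₂ => by
      unfold pd
      rw [fderiv_fderiv_apply (hg' z)]
      rfl
  have hM₀ : 0 ≤ M :=
    (Finset.sum_nonneg fun _ _ => Finset.sum_nonneg fun _ _ => abs_nonneg _).trans (hM z)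
  rw [fderiv_fderiv_apply (hg' z)]
  refine ContinuousLinearMap.opNorm_le_bound _ (by positivity) fun w => ?_
  rw [ContinuousLinearMap.flip_apply, Real.norm_eq_abs]
  calc _ ≤ ‖w‖ * ‖v‖ * ∑ l₁, ∑ l₂, |fderiv ℝ (fderiv ℝ g) z (Pi.single l₁ 1) (Pi.single l₂ 1)| :=
        abs_apply_apply_le_norm_mul_norm_mul_sum_abs _ w v
    _ ≤ ‖w‖ * ‖v‖ * M := by
        simp only [← hpd]
        gcongr
        exact hM z
    _ = M * ‖v‖ * ‖w‖ := by ring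

theorem abs_image_add_sub_sub_fderiv_le_of_sum_abs_pd_pd_le {g : (Fin d → ℝ) → ℝ}
    (hg : ContDiff ℝ 2 g) {M : ℝ}
    (hM : ∀ z, ∑ l₁, ∑ l₂, |pd d l₁ (pd d l₂ g) z| ≤ M) (y v : Fin d → ℝ) :
    |g (y + v) - g y - fderiv ℝ g y v| ≤ M * ‖v‖ ^ 2 / 2 := by
  have hΨ : Differentiable ℝ (fun z => fderiv ℝ g z v) :=
    ((hg.fderiv_right (m := 1) (by norm_num)).differentiable one_ne_zero).clm_apply
      (differentiable_const v)
  rw [← Real.norm_eq_abs]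
  refine norm_image_add_sub_sub_fderiv_le (hg.differentiable (by norm_num)) fun t ht => ?_
  calc _ ≤ M * ‖v‖ * ‖y + t • v - y‖ :=
        convex_univ.norm_image_sub_le_of_norm_fderiv_le (fun u _ => hΨ u)
          (fun u _ => norm_fderiv_fderiv_apply_le hg hM v u) (mem_univ _) (mem_univ _)
    _ = M * ‖v‖ ^ 2 * t := by
        rw [add_sub_cancel_left, norm_smul, Real.norm_of_nonneg ht.1]
        ring

variable {ι : Type*} [Fintype ι]

theorem norm_image_add_sub_sub_fderiv_le_of_forall_sum_abs_pd_pd_le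
    {B : (Fin d → ℝ) → (ι → ℝ)} (hB : ContDiff ℝ 2 B) {M : ℝ} (hM₀ : 0 ≤ M)
    (hM : ∀ i z, ∑ l₁, ∑ l₂, |pd d l₁ (pd d l₂ (fun y => B y i)) z| ≤ M) (y v : Fin d → ℝ) :
    ‖B (y + v) - B y - fderiv ℝ B y v‖ ≤ M * ‖v‖ ^ 2 / 2 := by
  refine (pi_norm_le_iff_of_nonneg (by positivity)).2 fun i => ?_
  have hBi : ContDiff ℝ 2 (fun y => B y i) := (contDiff_apply ℝ ℝ i).comp hB
  have hDBi : fderiv ℝ B y v i = fderiv ℝ (fun y => B y i) y v := by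
    rw [fderiv_apply ((hB.differentiable (by norm_num)) y)]
    rfl
  rw [Pi.sub_apply, Pi.sub_apply, hDBi, Real.norm_eq_abs]
  exact abs_image_add_sub_sub_fderiv_le_of_sum_abs_pd_pd_le hBi (hM i) y v

theorem norm_fderiv_le_of_forall_sum_abs_pd_le {G : (Fin d → ℝ) → (ι → ℝ)}
    (hG : Differentiable ℝ G) {C : ℝ} (hC₀ : 0 ≤ C)
    (hC : ∀ i z, ∑ l, |pd d l (fun y => G y i) z| ≤ C) (z : Fin d → ℝ) :
    ‖fderiv ℝ G z‖ ≤ C :=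
  opNorm_le_of_forall_sum_abs_apply_single_le _ hC₀ fun i => by
    simpa only [pd_apply_eq_fderiv_apply (hG z)] using hC i z

end PartialDerivatives

section ParticleSupport

variable {d : ℕ} {h ρ0 : ℝ} {φ : (Fin d → ℝ) → ℝ} {k : Fin d → ℤ}

theorem norm_sub_node_le_of_mem_support_part (hh : 0 < h) (hφ : ∀ x, φ x ≠ 0 → ‖x‖ ≤ ρ0)
    {y : Fin d → ℝ} (hy : y ∈ Function.support (part d h φ k)) :
    ‖y - node d h k‖ ≤ h * ρ0 := by
  have hφy : φ (fun i => y i / h - (k i : ℝ)) ≠ 0 := right_ne_zero_of_mul hy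
  have hy' : y - node d h k = h • fun i => y i / h - (k i : ℝ) := by
    ext i
    simp only [node, Pi.sub_apply, Pi.smul_apply, smul_eq_mul]
    field_simp
  rw [hy', norm_smul, Real.norm_of_nonneg hh.le]
  exact mul_le_mul_of_nonneg_left (hφ _ hφy) hh.le

theorem norm_sub_image_node_le (hh : 0 < h) (hφ : ∀ x, φ x ≠ 0 → ‖x‖ ≤ ρ0)
    {F : (Fin d → ℝ) ≃ (Fin d → ℝ)} (hF : Differentiable ℝ F) {C : ℝ}
    (hDF : ∀ z, ‖fderiv ℝ F z‖ ≤ C) {x : Fin d → ℝ}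
    (hx : x ∈ F1 d h F k '' Function.support (part d h φ k) ∪
      F '' Function.support (part d h φ k)) :
    ‖x - F (node d h k)‖ ≤ h * ρ0 * C := by
  have hC₀ : 0 ≤ C := (norm_nonneg _).trans (hDF 0)
  have hsupp : ∀ y ∈ Function.support (part d h φ k), C * ‖y - node d h k‖ ≤ h * ρ0 * C :=
    fun y hy => by
      rw [mul_comm _ C]
      exact mul_le_mul_of_nonneg_left (norm_sub_node_le_of_mem_support_part hh hφ hy) hC₀
  rcases hx with ⟨y, hy, rfl⟩ | ⟨y, hy, rfl⟩
  · rw [F1, add_sub_cancel_left]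
    exact ((fderiv ℝ F _).le_of_opNorm_le (hDF _) _).trans (hsupp y hy)
  · exact (convex_univ.norm_image_sub_le_of_norm_fderiv_le (fun z _ => hF z) (fun z _ => hDF z)
      (mem_univ _) (mem_univ _)).trans (hsupp y hy)

end ParticleSupport

theorem linearized_backward_flow_second_order_general
    (d : ℕ) (hd : 1 ≤ d) (h : ℝ) (hh : 0 < h)
    (φ : (Fin d → ℝ) → ℝ)
    (ρ0 : ℝ) (hφsupp : ∀ x, φ x ≠ 0 → ‖x‖ ≤ ρ0)
    (F : (Fin d → ℝ) ≃ (Fin d → ℝ))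
    (hF : ContDiff ℝ 1 (F : (Fin d → ℝ) → (Fin d → ℝ)))
    (hB : ContDiff ℝ 2 (F.symm : (Fin d → ℝ) → (Fin d → ℝ)))
    (cF1 : ℝ) (hcF1 : ∀ (i : Fin d) (x : Fin d → ℝ),
      ∑ l : Fin d, |pd d l (fun y => F y i) x| ≤ cF1)
    (cB2 : ℝ) (hcB2 : ∀ (i : Fin d) (x : Fin d → ℝ),
      ∑ l1 : Fin d, ∑ l2 : Fin d,
        |pd d l1 (pd d l2 (fun y => F.symm y i)) x| ≤ cB2) :
    ∀ k : Fin d → ℤ,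
      ∀ x ∈ (F1 d h F k '' Function.support (part d h φ k)
          ∪ F '' Function.support (part d h φ k)),
        ‖B1 d h F k x - F.symm x‖ ≤ h ^ 2 / 2 * (ρ0 * cF1) ^ 2 * cB2 := by
  intro k x hx
  have hcF1₀ : 0 ≤ cF1 := (Finset.sum_nonneg fun _ _ => abs_nonneg _).trans (hcF1 ⟨0, hd⟩ 0)
  have hcB2₀ : 0 ≤ cB2 :=
    (Finset.sum_nonneg fun _ _ => Finset.sum_nonneg fun _ _ => abs_nonneg _).trans (hcB2 ⟨0, hd⟩ 0)
  have hFdiff : Differentiable ℝ F := hF.differentiable one_ne_zero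
  set y₀ := F (node d h k)
  have hv : ‖x - y₀‖ ≤ h * ρ0 * cF1 := norm_sub_image_node_le hh hφsupp hFdiff
    (norm_fderiv_le_of_forall_sum_abs_pd_le hFdiff hcF1₀ hcF1) hx
  have hflow : B1 d h F k x - F.symm x =
      -(F.symm (y₀ + (x - y₀)) - F.symm y₀ - fderiv ℝ F.symm y₀ (x - y₀)) := by
    rw [add_sub_cancel, Equiv.symm_apply_apply, B1]
    abel
  rw [hflow, norm_neg]
  calc _ ≤ cB2 * ‖x - y₀‖ ^ 2 / 2 :=
        norm_image_add_sub_sub_fderiv_le_of_forall_sum_abs_pd_pd_le hB hcB2₀ hcB2 y₀ (x - y₀)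
    _ ≤ cB2 * (h * ρ0 * cF1) ^ 2 / 2 := by gcongr
    _ = h ^ 2 / 2 * (ρ0 * cF1) ^ 2 * cB2 := by ring

/-- on `Σ_{h,k} := F̄_{(1),k}(Σ⁰_{h,k}) ∪ F̄(Σ⁰_{h,k})` the linearized backward
flows approximate the exact backward flow at second order:
`sup_k sup_{x ∈ Σ_{h,k}} ‖B̄_{(1),k}(x) − B̄(x)‖_∞ ≤ (h²/2)(ρ⁰|F̄|₁)² |B̄|₂`. -/
theorem linearized_backward_flow_second_order
    (d : ℕ) (hd : 1 ≤ d) (h : ℝ) (hh : 0 < h)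
    (φ : (Fin d → ℝ) → ℝ) (Lφ : ℝ≥0) (hφLip : LipschitzWith Lφ φ)
    (ρ0 : ℝ) (hρ0 : 0 < ρ0) (hφsupp : ∀ x, φ x ≠ 0 → ‖x‖ ≤ ρ0)
    (F : (Fin d → ℝ) ≃ (Fin d → ℝ))
    (hF : ContDiff ℝ 1 (F : (Fin d → ℝ) → (Fin d → ℝ)))
    (hB : ContDiff ℝ 2 (F.symm : (Fin d → ℝ) → (Fin d → ℝ)))
    (cF1 : ℝ) (hcF1 : ∀ (i : Fin d) (x : Fin d → ℝ),
      ∑ l : Fin d, |pd d l (fun y => F y i) x| ≤ cF1)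
    (cB2 : ℝ) (hcB2 : ∀ (i : Fin d) (x : Fin d → ℝ),
      ∑ l1 : Fin d, ∑ l2 : Fin d,
        |pd d l1 (pd d l2 (fun y => F.symm y i)) x| ≤ cB2) :
    ∀ k : Fin d → ℤ,
      ∀ x ∈ (F1 d h F k '' Function.support (part d h φ k)
          ∪ F '' Function.support (part d h φ k)),
        ‖B1 d h F k x - F.symm x‖ ≤ h ^ 2 / 2 * (ρ0 * cF1) ^ 2 * cB2 :=
  linearized_backward_flow_second_order_general d hd h hh φ ρ0 hφsupp F hF hB cF1 hcF1 cB2 hcB2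
end

section
/- For r ≥ 1, the degree-r Taylor approximations of the backward flow satisfy, on the enlarged a priori supports, the estimate ẽ_{B,(r)}(h) := sup_{k∈ℤ^d} sup_{x∈Σ̃_{h,k}} ‖B̄_{(r),k}(x) − B̄(x)‖_∞ ≤ h^{r+1} (ρ̃ |F̄|₁)^{r+1} |B̄|_{r+1} / (r+1)!, where ρ̃ := ρ⁰ (1 + (hρ⁰/2) |F̄|₁² |B̄|₂). -/
open scoped NNReal
open Set

/-- Iterated partial derivative `∂_{l₁} ⋯ ∂_{l_m} g`. -/
noncomputable def iterPD (d : ℕ) : List (Fin d) → ((Fin d → ℝ) → ℝ) → ((Fin d → ℝ) → ℝ)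
  | [], g => g
  | l :: ls, g => pd d l (iterPD d ls g)

/-- Enlarged radius `ρ̃_{h,k} := ρ⁰ + h⁻¹ sup_{x ∈ F̄(Σ⁰_{h,k})} ‖B̄_{(1),k}(x) − B̄(x)‖_∞`. -/
noncomputable def ρt (d : ℕ) (h ρ0 : ℝ) (φ : (Fin d → ℝ) → ℝ)
    (F : (Fin d → ℝ) ≃ (Fin d → ℝ)) (k : Fin d → ℤ) : ℝ :=
  ρ0 + h⁻¹ * ⨆ x : (F '' Function.support (part d h φ k)),
      ‖B1 d h F k x.1 - F.symm x.1‖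

/-- Enlarged a priori support `Σ̃_{h,k} := F̄_{(1),k}(B_∞(x⁰_k, h ρ̃_{h,k}))`. -/
noncomputable def St (d : ℕ) (h ρ0 : ℝ) (φ : (Fin d → ℝ) → ℝ)
    (F : (Fin d → ℝ) ≃ (Fin d → ℝ)) (k : Fin d → ℤ) : Set (Fin d → ℝ) :=
  F1 d h F k '' Metric.closedBall (node d h k) (h * ρt d h ρ0 φ F k)

/-- Degree-`r` Taylor polynomial of `B` at `a`. -/
noncomputable def taylorP (d r : ℕ) (B : (Fin d → ℝ) → (Fin d → ℝ))
    (a x : Fin d → ℝ) : Fin d → ℝ :=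
  ∑ j ∈ Finset.range (r + 1),
    (j.factorial : ℝ)⁻¹ • iteratedFDeriv ℝ j B a (fun _ => x - a)

/-! The error is the Lagrange remainder of Taylor's theorem along the segment from `F̄(x⁰_k)` to
`x`: coordinatewise, the `(r+1)`-st derivative in the direction `v` is at most
`|B̄|_{r+1} ‖v‖_∞^{r+1}`. The case `r = 1` bounds `‖B̄_{(1),k} − B̄‖_∞` on `F̄(Σ⁰_{h,k})`, which lies
within `|F̄|₁ hρ⁰` of `F̄(x⁰_k)`, by `|B̄|₂ (|F̄|₁ hρ⁰)² / 2`; hence `ρ̃_{h,k} ≤ ρ̃`, and every point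
of `Σ̃_{h,k}` lies within `|F̄|₁ h ρ̃` of `F̄(x⁰_k)`. -/

open Finset

section CoordinateBounds

variable {d : ℕ}

lemma abs_apply_le_sum_abs_apply_single (L : (Fin d → ℝ) →L[ℝ] ℝ) (v : Fin d → ℝ) :
    |L v| ≤ (∑ l, |L (Pi.single l 1)|) * ‖v‖ := by
  conv_lhs => rw [pi_eq_sum_univ' v, map_sum]
  refine (abs_sum_le_sum_abs _ _).trans ?_
  rw [sum_mul]
  refine sum_le_sum fun l _ => ?_
  rw [map_smul, smul_eq_mul, abs_mul, mul_comm]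
  exact mul_le_mul_of_nonneg_left (norm_le_pi_norm v l) (abs_nonneg _)

lemma abs_apply_diag_le_sum_abs_apply_single {m : ℕ}
    (f : ContinuousMultilinearMap ℝ (fun _ : Fin m => Fin d → ℝ) ℝ) (v : Fin d → ℝ) :
    |f (fun _ => v)| ≤ (∑ ms : Fin m → Fin d, |f (fun j => Pi.single (ms j) 1)|) * ‖v‖ ^ m := by
  conv_lhs => rw [pi_eq_sum_univ' v, f.map_sum]
  refine (abs_sum_le_sum_abs _ _).trans ?_
  rw [sum_mul]
  refine sum_le_sum fun ms _ => ?_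
  rw [f.map_smul_univ, smul_eq_mul, abs_mul, mul_comm, abs_prod]
  refine mul_le_mul_of_nonneg_left ?_ (abs_nonneg _)
  calc ∏ j, |v (ms j)| ≤ ∏ _j : Fin m, ‖v‖ :=
        prod_le_prod (fun _ _ => abs_nonneg _) fun j _ => norm_le_pi_norm v (ms j)
    _ = ‖v‖ ^ m := by rw [prod_const, card_univ, Fintype.card_fin]

lemma iterPD_ofFn_eq_iteratedFDeriv {m : ℕ} {g : (Fin d → ℝ) → ℝ} (hg : ContDiff ℝ m g)
    (ms : Fin m → Fin d) (x : Fin d → ℝ) :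
    iterPD d (List.ofFn ms) g x = iteratedFDeriv ℝ m g x (fun j => Pi.single (ms j) 1) := by
  induction m generalizing x with
  | zero => simp [iterPD]
  | succ m ih =>
    have hdiff : Differentiable ℝ (iteratedFDeriv ℝ m g) :=
      hg.differentiable_iteratedFDeriv (by exact_mod_cast Nat.lt_succ_self m)
    have htail : iterPD d (List.ofFn fun j => ms j.succ) g
        = fun y => iteratedFDeriv ℝ m g y (fun j => Pi.single (ms j.succ) 1) :=
      funext fun y => ih hg.of_succ _ y
    rw [List.ofFn_succ, iterPD, pd, htail,
      fderiv_continuousMultilinear_apply_const_apply (hdiff x), iteratedFDeriv_succ_apply_left]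
    rfl

lemma abs_iteratedFDeriv_diag_le {m : ℕ} {g : (Fin d → ℝ) → ℝ} (hg : ContDiff ℝ m g)
    {c : ℝ} {z : Fin d → ℝ} (hc : ∑ ms : Fin m → Fin d, |iterPD d (List.ofFn ms) g z| ≤ c)
    (v : Fin d → ℝ) :
    |iteratedFDeriv ℝ m g z (fun _ => v)| ≤ c * ‖v‖ ^ m := by
  refine (abs_apply_diag_le_sum_abs_apply_single _ v).trans ?_
  simp only [← iterPD_ofFn_eq_iteratedFDeriv hg]
  gcongr

lemma norm_fderiv_apply_le [NeZero d] {F : (Fin d → ℝ) → (Fin d → ℝ)} {z : Fin d → ℝ}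
    (hF : DifferentiableAt ℝ F z) {c : ℝ}
    (hc : ∀ i, ∑ l, |pd d l (fun y => F y i) z| ≤ c) (v : Fin d → ℝ) :
    ‖fderiv ℝ F z v‖ ≤ c * ‖v‖ := by
  refine (pi_norm_le_iff_of_nonempty (fderiv ℝ F z v)).2 fun i => ?_
  let πi := ContinuousLinearMap.proj (R := ℝ) (φ := fun _ : Fin d => ℝ) i
  have hcomp : fderiv ℝ (fun y => F y i) z = πi.comp (fderiv ℝ F z) :=
    (πi.hasFDerivAt.comp z hF.hasFDerivAt).fderiv
  calc ‖fderiv ℝ F z v i‖ = |fderiv ℝ (fun y => F y i) z v| := by rw [hcomp]; rfl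
    _ ≤ (∑ l, |fderiv ℝ (fun y => F y i) z (Pi.single l 1)|) * ‖v‖ :=
        abs_apply_le_sum_abs_apply_single _ v
    _ ≤ c * ‖v‖ := by gcongr; exact hc i

lemma norm_sub_le_of_sum_abs_pd_le [NeZero d] {F : (Fin d → ℝ) → (Fin d → ℝ)}
    (hF : Differentiable ℝ F) {c : ℝ} (hc : ∀ i z, ∑ l, |pd d l (fun y => F y i) z| ≤ c)
    (w w' : Fin d → ℝ) : ‖F w - F w'‖ ≤ c * ‖w - w'‖ := by
  have hc₀ : 0 ≤ c := (sum_nonneg fun _ _ => abs_nonneg _).trans (hc 0 0)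
  exact convex_univ.norm_image_sub_le_of_norm_fderiv_le (fun z _ => hF z)
    (fun z _ => ContinuousLinearMap.opNorm_le_bound _ hc₀
      (norm_fderiv_apply_le (hF z) (fun i => hc i z))) (mem_univ w') (mem_univ w)

end CoordinateBounds

section Taylor

variable {E : Type*} [NormedAddCommGroup E] [NormedSpace ℝ E]

lemma iteratedDeriv_comp_line {G : Type*} [NormedAddCommGroup G] [NormedSpace ℝ G]
    {n : ℕ} {f : E → G} (hf : ContDiff ℝ n f) (A v : E) {m : ℕ} (hm : m ≤ n) (t : ℝ) :
    iteratedDeriv m (fun s : ℝ => f (A + s • v)) t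
      = iteratedFDeriv ℝ m f (A + t • v) (fun _ => v) := by
  have hshift : ContDiff ℝ n fun z => f (A + z) := hf.comp (contDiff_const.add contDiff_id)
  have hline : (fun s : ℝ => f (A + s • v))
      = (fun z => f (A + z)) ∘ ContinuousLinearMap.smulRight (ContinuousLinearMap.id ℝ ℝ) v := by
    funext s; simp
  rw [iteratedDeriv_eq_iteratedFDeriv, hline,
    ContinuousLinearMap.iteratedFDeriv_comp_right _ hshift _
      (by exact_mod_cast hm), iteratedFDeriv_comp_add_left]
  simp

lemma abs_sub_sum_taylor_le {n : ℕ} {f : E → ℝ} (hf : ContDiff ℝ (n + 1) f) (A x : E) {C : ℝ}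
    (hC : ∀ z, |iteratedFDeriv ℝ (n + 1) f z (fun _ => x - A)| ≤ C) :
    |f x - ∑ j ∈ range (n + 1), (j.factorial : ℝ)⁻¹ * iteratedFDeriv ℝ j f A (fun _ => x - A)|
      ≤ C / (n + 1).factorial := by
  set g : ℝ → ℝ := fun s => f (A + s • (x - A))
  have hg : ContDiff ℝ (n + 1) g := hf.comp (contDiff_const.add (contDiff_id.smul contDiff_const))
  obtain ⟨t, -, hrem⟩ := taylor_mean_remainder_lagrange_iteratedDeriv (x₀ := 0) (x := 1)
    zero_ne_one hg.contDiffOn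
  have hg1 : g 1 = f x := by simp [g]
  have htaylor : taylorWithinEval g n (uIcc 0 1) 0 1
      = ∑ j ∈ range (n + 1), (j.factorial : ℝ)⁻¹ * iteratedFDeriv ℝ j f A (fun _ => x - A) := by
    rw [taylor_within_apply]
    refine sum_congr rfl fun j hj => ?_
    have hjn : (j : WithTop ℕ∞) ≤ n + 1 := by
      exact_mod_cast (Nat.lt_succ_iff.mp (mem_range.mp hj)).trans (Nat.le_succ n)
    rw [iteratedDerivWithin_eq_iteratedDeriv (uniqueDiffOn_uIcc zero_ne_one)
        (hg.contDiffAt.of_le hjn) left_mem_uIcc,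
      iteratedDeriv_comp_line hf A (x - A) (by exact_mod_cast hjn)]
    simp
  rw [← hg1, ← htaylor, hrem, iteratedDeriv_comp_line hf A (x - A) le_rfl]
  simp only [sub_zero, one_pow, mul_one, abs_div, Nat.abs_cast]
  gcongr
  exact hC _

end Taylor

section TaylorPolynomial

variable {d : ℕ}

lemma taylorP_apply {n : ℕ} {B : (Fin d → ℝ) → (Fin d → ℝ)} (hB : ContDiff ℝ n B)
    (A x : Fin d → ℝ) (i : Fin d) :
    taylorP d n B A x i
      = ∑ j ∈ range (n + 1),
          (j.factorial : ℝ)⁻¹ * iteratedFDeriv ℝ j (fun y => B y i) A (fun _ => x - A) := by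
  rw [taylorP, Finset.sum_apply]
  refine sum_congr rfl fun j hj => ?_
  have hjn : (j : WithTop ℕ∞) ≤ n := by exact_mod_cast Nat.lt_succ_iff.mp (mem_range.mp hj)
  have hcomp : iteratedFDeriv ℝ j (fun y => B y i) A = _ :=
    (ContinuousLinearMap.proj (R := ℝ) (φ := fun _ : Fin d => ℝ) i).iteratedFDeriv_comp_left
      (hB.contDiffAt (x := A)) hjn
  rw [hcomp]
  rfl

lemma taylorP_one (B : (Fin d → ℝ) → (Fin d → ℝ)) (A x : Fin d → ℝ) :
    taylorP d 1 B A x = B A + fderiv ℝ B A (x - A) := by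
  simp [taylorP, sum_range_succ, iteratedFDeriv_one_apply]

lemma norm_taylorP_sub_le [NeZero d] {n : ℕ} {B : (Fin d → ℝ) → (Fin d → ℝ)}
    (hB : ContDiff ℝ (n + 1) B) {c : ℝ}
    (hc : ∀ i z, ∑ ms : Fin (n + 1) → Fin d, |iterPD d (List.ofFn ms) (fun y => B y i) z| ≤ c)
    (A x : Fin d → ℝ) :
    ‖taylorP d n B A x - B x‖ ≤ c * ‖x - A‖ ^ (n + 1) / (n + 1).factorial := by
  refine (pi_norm_le_iff_of_nonempty _).2 fun i => ?_
  have hBi : ContDiff ℝ (n + 1) fun y => B y i := (contDiff_apply ℝ ℝ i).comp hB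
  rw [Pi.sub_apply, Real.norm_eq_abs, abs_sub_comm, taylorP_apply hB.of_succ]
  exact abs_sub_sum_taylor_le hBi A x fun z =>
    abs_iteratedFDeriv_diag_le (by exact_mod_cast hBi) (hc i z) _

end TaylorPolynomial

section Flow

variable {d : ℕ} {h : ℝ} {F : (Fin d → ℝ) ≃ (Fin d → ℝ)} {k : Fin d → ℤ}

lemma sum_abs_iterPD_two (g : (Fin d → ℝ) → ℝ) (z : Fin d → ℝ) :
    ∑ ms : Fin 2 → Fin d, |iterPD d (List.ofFn ms) g z|
      = ∑ l₁, ∑ l₂, |pd d l₁ (pd d l₂ g) z| := by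
  rw [← Fintype.sum_prod_type']
  exact Fintype.sum_equiv (finTwoArrowEquiv (Fin d)) _ _ fun ms => by simp [iterPD]

lemma norm_sub_node_le_of_part_ne_zero (hh : 0 < h) {φ : (Fin d → ℝ) → ℝ} {ρ0 : ℝ}
    (hφsupp : ∀ x, φ x ≠ 0 → ‖x‖ ≤ ρ0) {w : Fin d → ℝ} (hw : part d h φ k w ≠ 0) :
    ‖w - node d h k‖ ≤ h * ρ0 := by
  have hφ : φ (fun i => w i / h - k i) ≠ 0 := fun h0 => hw (by simp [part, h0])
  have hscale : w - node d h k = h • fun i => w i / h - k i := by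
    funext i
    simp only [Pi.sub_apply, Pi.smul_apply, smul_eq_mul, node]
    field_simp
  rw [hscale, norm_smul, Real.norm_eq_abs, abs_of_pos hh]
  exact mul_le_mul_of_nonneg_left (hφsupp _ hφ) hh.le

lemma B1_eq_taylorP_one : B1 d h F k = taylorP d 1 F.symm (F (node d h k)) := by
  funext x
  simp [taylorP_one, B1]

lemma norm_B1_sub_le [NeZero d] (hB : ContDiff ℝ 2 F.symm) {c : ℝ}
    (hc : ∀ i z, ∑ l₁, ∑ l₂, |pd d l₁ (pd d l₂ (fun y => F.symm y i)) z| ≤ c) (z : Fin d → ℝ) :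
    ‖B1 d h F k z - F.symm z‖ ≤ c * ‖z - F (node d h k)‖ ^ 2 / 2 := by
  simpa [B1_eq_taylorP_one] using norm_taylorP_sub_le (n := 1) hB
    (fun i z => (sum_abs_iterPD_two _ z).trans_le (hc i z)) _ z

lemma F1_sub_eq_fderiv (y : Fin d → ℝ) :
    F1 d h F k y - F (node d h k) = fderiv ℝ F (node d h k) (y - node d h k) := by
  simp [F1]

lemma ρt_le (hh : 0 < h) {φ : (Fin d → ℝ) → ℝ} {ρ0 : ℝ} (hφsupp : ∀ x, φ x ≠ 0 → ‖x‖ ≤ ρ0)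
    {cF1 cB2 : ℝ} (hcF1 : 0 ≤ cF1) (hcB2 : 0 ≤ cB2)
    (hF : ∀ w, ‖F w - F (node d h k)‖ ≤ cF1 * ‖w - node d h k‖)
    (hB1 : ∀ z, ‖B1 d h F k z - F.symm z‖ ≤ cB2 * ‖z - F (node d h k)‖ ^ 2 / 2) :
    ρt d h ρ0 φ F k ≤ ρ0 * (1 + h * ρ0 / 2 * cF1 ^ 2 * cB2) := by
  have hsup : ⨆ z : (F '' Function.support (part d h φ k)), ‖B1 d h F k z.1 - F.symm z.1‖
      ≤ cB2 * (cF1 * (h * ρ0)) ^ 2 / 2 := by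
    refine Real.iSup_le ?_ (by positivity)
    rintro ⟨_, w, hw, rfl⟩
    have hFw : ‖F w - F (node d h k)‖ ≤ cF1 * (h * ρ0) :=
      (hF w).trans (mul_le_mul_of_nonneg_left (norm_sub_node_le_of_part_ne_zero hh hφsupp hw) hcF1)
    refine (hB1 (F w)).trans ?_
    gcongr
  calc ρt d h ρ0 φ F k ≤ ρ0 + h⁻¹ * (cB2 * (cF1 * (h * ρ0)) ^ 2 / 2) := by
        unfold ρt; gcongr
    _ = ρ0 * (1 + h * ρ0 / 2 * cF1 ^ 2 * cB2) := by field_simp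

end Flow

theorem taylor_backward_flow_error_on_enlarged_supports_general
    (d r : ℕ) (hd : 1 ≤ d) (hr : 1 ≤ r) (h : ℝ) (hh : 0 < h)
    (φ : (Fin d → ℝ) → ℝ)
    (ρ0 : ℝ) (hφsupp : ∀ x, φ x ≠ 0 → ‖x‖ ≤ ρ0)
    (F : (Fin d → ℝ) ≃ (Fin d → ℝ))
    (hF : ContDiff ℝ 1 (F : (Fin d → ℝ) → (Fin d → ℝ)))
    (hB : ContDiff ℝ (r + 1 : ℕ) (F.symm : (Fin d → ℝ) → (Fin d → ℝ)))
    (cF1 : ℝ) (hcF1 : ∀ (i : Fin d) (x : Fin d → ℝ),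
      ∑ l : Fin d, |pd d l (fun y => F y i) x| ≤ cF1)
    (cB2 : ℝ) (hcB2 : ∀ (i : Fin d) (x : Fin d → ℝ),
      ∑ l1 : Fin d, ∑ l2 : Fin d,
        |pd d l1 (pd d l2 (fun y => F.symm y i)) x| ≤ cB2)
    (cBr : ℝ) (hcBr : ∀ (i : Fin d) (x : Fin d → ℝ),
      ∑ ls : Fin (r + 1) → Fin d,
        |iterPD d (List.ofFn ls) (fun y => F.symm y i) x| ≤ cBr) :
    ∀ k : Fin d → ℤ, ∀ x ∈ St d h ρ0 φ F k,
      ‖taylorP d r (F.symm) (F (node d h k)) x - F.symm x‖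
        ≤ h ^ (r + 1) * (ρ0 * (1 + h * ρ0 / 2 * cF1 ^ 2 * cB2) * cF1) ^ (r + 1) * cBr
            / (r + 1).factorial := by
  rintro k _ ⟨y, hy, rfl⟩
  have : NeZero d := ⟨by omega⟩
  have hcF1₀ : 0 ≤ cF1 := (sum_nonneg fun _ _ => abs_nonneg _).trans (hcF1 0 0)
  have hcB2₀ : 0 ≤ cB2 :=
    (sum_nonneg fun _ _ => sum_nonneg fun _ _ => abs_nonneg _).trans (hcB2 0 0)
  have hcBr₀ : 0 ≤ cBr := (sum_nonneg fun _ _ => abs_nonneg _).trans (hcBr 0 0)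
  have hFd : Differentiable ℝ F := hF.differentiable one_ne_zero
  have hB₂ : ContDiff ℝ 2 F.symm := hB.of_le (by exact_mod_cast (by omega : 2 ≤ r + 1))
  have hρt := ρt_le (k := k) hh hφsupp hcF1₀ hcB2₀ (norm_sub_le_of_sum_abs_pd_le hFd hcF1 · _)
    (norm_B1_sub_le hB₂ hcB2)
  generalize ρ0 * (1 + h * ρ0 / 2 * cF1 ^ 2 * cB2) = P at hρt ⊢
  have hy_dist : ‖y - node d h k‖ ≤ h * P :=
    (mem_closedBall_iff_norm.1 hy).trans (mul_le_mul_of_nonneg_left hρt hh.le)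
  have hx_dist : ‖F1 d h F k y - F (node d h k)‖ ≤ cF1 * (h * P) := by
    rw [F1_sub_eq_fderiv]
    exact (norm_fderiv_apply_le (hFd _) (fun i => hcF1 i _) _).trans
      (mul_le_mul_of_nonneg_left hy_dist hcF1₀)
  calc _ ≤ cBr * ‖F1 d h F k y - F (node d h k)‖ ^ (r + 1) / (r + 1).factorial :=
        norm_taylorP_sub_le hB hcBr _ _
    _ ≤ cBr * (cF1 * (h * P)) ^ (r + 1) / (r + 1).factorial := by gcongr
    _ = _ := by ring

/-- the degree-`r` Taylor approximations of the backward flow satisfy, on the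
enlarged a priori supports, `ẽ_{B,(r)}(h) ≤ h^{r+1} (ρ̃ |F̄|₁)^{r+1} |B̄|_{r+1} / (r+1)!`
with `ρ̃ := ρ⁰ (1 + (hρ⁰/2) |F̄|₁² |B̄|₂)`. -/
theorem taylor_backward_flow_error_on_enlarged_supports
    (d r : ℕ) (hd : 1 ≤ d) (hr : 1 ≤ r) (h : ℝ) (hh : 0 < h)
    (φ : (Fin d → ℝ) → ℝ) (Lφ : ℝ≥0) (hφLip : LipschitzWith Lφ φ)
    (ρ0 : ℝ) (hρ0 : 0 < ρ0) (hφsupp : ∀ x, φ x ≠ 0 → ‖x‖ ≤ ρ0)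
    (F : (Fin d → ℝ) ≃ (Fin d → ℝ))
    (hF : ContDiff ℝ 1 (F : (Fin d → ℝ) → (Fin d → ℝ)))
    (hB : ContDiff ℝ (r + 1 : ℕ) (F.symm : (Fin d → ℝ) → (Fin d → ℝ)))
    (cF1 : ℝ) (hcF1 : ∀ (i : Fin d) (x : Fin d → ℝ),
      ∑ l : Fin d, |pd d l (fun y => F y i) x| ≤ cF1)
    (cB2 : ℝ) (hcB2 : ∀ (i : Fin d) (x : Fin d → ℝ),
      ∑ l1 : Fin d, ∑ l2 : Fin d,
        |pd d l1 (pd d l2 (fun y => F.symm y i)) x| ≤ cB2)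
    (cBr : ℝ) (hcBr : ∀ (i : Fin d) (x : Fin d → ℝ),
      ∑ ls : Fin (r + 1) → Fin d,
        |iterPD d (List.ofFn ls) (fun y => F.symm y i) x| ≤ cBr) :
    ∀ k : Fin d → ℤ, ∀ x ∈ St d h ρ0 φ F k,
      ‖taylorP d r (F.symm) (F (node d h k)) x - F.symm x‖
        ≤ h ^ (r + 1) * (ρ0 * (1 + h * ρ0 / 2 * cF1 ^ 2 * cB2) * cF1) ^ (r + 1) * cBr
            / (r + 1).factorial :=
  taylor_backward_flow_error_on_enlarged_supports_general d r hd hr h hh φ ρ0 hφsupp F hF hB cF1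
    hcF1 cB2 hcB2 cBr hcBr
end
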